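/- arXiv:2601.20775 — 5 statements merged into one kernel-verified Lean document; each statement's English description precedes it below -/
import Mathlib

section
/- Let H be a hypothesis class, let H' ⊆ H be a set of hypotheses with H' ⊆ B_H(h, 2r) for some h ∈ H' and some r > 0, and let h' ∈ H' satisfy D_S(h, h') ≥ r/2. If DIS_S(H') is nonempty, then D_{DIS_S(H')}(h, h') ≥ (n·r) / (2·|DIS_S(B_H(h, 2r))|). -/
open scoped Classical

/-- Distance between two hypotheses on a finite set `T`:
fraction of points of `T` on which they disagree. -/
noncomputable def hypDist {α : Type*} (T : Finset α) (h h' : α → Bool) : ℝ :=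
  ((T.filter fun x => h x ≠ h' x).card : ℝ) / T.card

/-- Ball of radius `r` around `h` inside the class `H`, distance measured on `S`. -/
noncomputable def hypBall {α : Type*} (S : Finset α) (H : Set (α → Bool))
    (h : α → Bool) (r : ℝ) : Set (α → Bool) :=
  {h' ∈ H | hypDist S h h' ≤ r}

/-- Disagreement region (as a finite subset of `S`) of a set `V` of hypotheses. -/
noncomputable def DIS {α : Type*} (S : Finset α) (V : Set (α → Bool)) : Finset α :=
  S.filter fun x => ∃ h₁ ∈ V, ∃ h₂ ∈ V, h₁ x ≠ h₂ x

/-!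
The points of `S` where `h` and `h'` disagree all lie in `DIS_S(H')`, so on `DIS_S(H')` the
distance `D(h, h')` counts the same at least `n r / 2` points, now divided by `|DIS_S(H')|`.
Since `H' ⊆ B_H(h, 2r)`, that denominator is at most `|DIS_S(B_H(h, 2r))|`.
-/

namespace Finset

variable {α : Type*}

theorem card_div_card_le_of_subset {A T U : Finset α} (hAT : A ⊆ T) (hTU : T ⊆ U) :
    (A.card : ℝ) / U.card ≤ A.card / T.card := by
  rcases T.eq_empty_or_nonempty with rfl | hT
  · simp [subset_empty.mp hAT]
  · exact div_le_div_of_nonneg_left (by positivity) (mod_cast hT.card_pos)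
      (mod_cast card_le_card hTU)

end Finset

section Disagreement

open Finset

variable {α : Type*} (S : Finset α)

theorem DIS_subset (V : Set (α → Bool)) : DIS S V ⊆ S :=
  filter_subset _ S

theorem DIS_mono {V W : Set (α → Bool)} (hVW : V ⊆ W) : DIS S V ⊆ DIS S W :=
  monotone_filter_right S fun _ _ ⟨h₁, h₁V, h₂, h₂V, hne⟩ => ⟨h₁, hVW h₁V, h₂, hVW h₂V, hne⟩

theorem filter_ne_subset_DIS {V : Set (α → Bool)} {h h' : α → Bool} (hV : h ∈ V)
    (hV' : h' ∈ V) : S.filter (fun x => h x ≠ h' x) ⊆ DIS S V :=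
  monotone_filter_right S fun _ _ hne => ⟨h, hV, h', hV', hne⟩

theorem hypDist_eq_of_filter_ne_subset {T : Finset α} {h h' : α → Bool} (hTS : T ⊆ S)
    (hST : S.filter (fun x => h x ≠ h' x) ⊆ T) :
    hypDist T h h' = ((S.filter fun x => h x ≠ h' x).card : ℝ) / T.card := by
  have hfilter : T.filter (fun x => h x ≠ h' x) = S.filter (fun x => h x ≠ h' x) :=
    (filter_subset_filter (fun x => h x ≠ h' x) hTS).antisymm fun x hx =>
      mem_filter.mpr ⟨hST hx, (mem_filter.mp hx).2⟩
  rw [hypDist, hfilter]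

theorem card_mul_le_of_le_hypDist {h h' : α → Bool} {c : ℝ} (hc : c ≤ hypDist S h h') :
    (S.card : ℝ) * c ≤ (S.filter fun x => h x ≠ h' x).card := by
  rcases S.eq_empty_or_nonempty with rfl | hS
  · simp
  · calc (S.card : ℝ) * c ≤ S.card * hypDist S h h' := by gcongr
      _ = (S.filter fun x => h x ≠ h' x).card := mul_div_cancel₀ _ (mod_cast hS.card_pos.ne')

end Disagreement

theorem stmt4_general {α : Type*} (S : Finset α)
    (H H' : Set (α → Bool))
    (h : α → Bool) (r : ℝ) (hhH' : h ∈ H')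
    (hball : H' ⊆ hypBall S H h (2 * r))
    (h' : α → Bool) (hh' : h' ∈ H') (hd : r / 2 ≤ hypDist S h h') :
    (S.card : ℝ) * r / (2 * (DIS S (hypBall S H h (2 * r))).card)
      ≤ hypDist (DIS S H') h h' := by
  have hdis := filter_ne_subset_DIS S hhH' hh'
  rw [hypDist_eq_of_filter_ne_subset S (DIS_subset S H') hdis]
  calc (S.card : ℝ) * r / (2 * (DIS S (hypBall S H h (2 * r))).card)
      = S.card * (r / 2) / (DIS S (hypBall S H h (2 * r))).card := by ring
    _ ≤ (S.filter fun x => h x ≠ h' x).card / (DIS S (hypBall S H h (2 * r))).card := by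
      gcongr
      exact card_mul_le_of_le_hypDist S hd
    _ ≤ _ := Finset.card_div_card_le_of_subset hdis (DIS_mono S hball)

/-- If `H' ⊆ B_H(h, 2r)` with `h ∈ H'`, `r > 0`, and `h' ∈ H'` satisfies
`D_S(h, h') ≥ r/2`, and `DIS_S(H')` is nonempty, then
`D_{DIS_S(H')}(h, h') ≥ n·r / (2·|DIS_S(B_H(h, 2r))|)`. -/
theorem stmt4 {α : Type*} (S : Finset α) (hS : 1 ≤ S.card)
    (H H' : Set (α → Bool)) (hH'H : H' ⊆ H)
    (h : α → Bool) (r : ℝ) (hr : 0 < r) (hhH' : h ∈ H')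
    (hball : H' ⊆ hypBall S H h (2 * r))
    (h' : α → Bool) (hh' : h' ∈ H') (hd : r / 2 ≤ hypDist S h h')
    (hne : (DIS S H').Nonempty) :
    (S.card : ℝ) * r / (2 * (DIS S (hypBall S H h (2 * r))).card)
      ≤ hypDist (DIS S H') h h' :=
  stmt4_general S H H' h r hhH' hball h' hh' hd
end

section
/- Let 1 ≤ L ≤ R ≤ n, and let t and t* be two stump threshold indices with L ≤ t ≤ R+1 and L ≤ t* ≤ R+1. Then err_{[L,R]}(s_t) ≥ |t − t*| / (R − L + 1) − err_{[L,R]}(s_{t*}). -/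
/-- The decision stump with threshold index `t` assigns label `1` to index `j`
iff `t ≤ j`. -/
def stump (t j : ℕ) : Bool := decide (t ≤ j)

/-- Error of the stump with threshold index `t` on the index interval `[L, R]`,
with labels `Y`. -/
noncomputable def stumpErr (Y : ℕ → Bool) (L R t : ℕ) : ℝ :=
  (((Finset.Icc L R).filter fun j => stump t j ≠ Y j).card : ℝ) / ((R : ℝ) - L + 1)

lemma stump_key (Y : ℕ → Bool) (L R : ℕ) (t tstar : ℕ) (h : t ≤ tstar)
    (ht : L ≤ t) (hts' : tstar ≤ R + 1) :
    tstar - t ≤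
      ((Finset.Icc L R).filter fun j => stump t j ≠ Y j).card +
      ((Finset.Icc L R).filter fun j => stump tstar j ≠ Y j).card := by
  have hsub : Finset.Ico t tstar ⊆
      (((Finset.Icc L R).filter fun j => stump t j ≠ Y j) ∪
       ((Finset.Icc L R).filter fun j => stump tstar j ≠ Y j)) := by
    intro j hj
    simp only [Finset.mem_Ico] at hj
    have hjmem : j ∈ Finset.Icc L R := by rw [Finset.mem_Icc]; omega
    have hne : stump t j ≠ stump tstar j := by
      simp only [stump, ne_eq, decide_eq_decide]
      omega
    simp only [Finset.mem_union, Finset.mem_filter]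
    by_cases hY : stump t j = Y j
    · right; exact ⟨hjmem, by rw [← hY]; exact fun h => hne h.symm⟩
    · left; exact ⟨hjmem, hY⟩
  have hcard := Finset.card_le_card hsub
  rw [Nat.card_Ico] at hcard
  exact le_trans hcard (Finset.card_union_le _ _)

/-- For thresholds `t, t*` in `[L, R+1]`,
`err_{[L,R]}(s_t) ≥ |t − t*| / (R − L + 1) − err_{[L,R]}(s_{t*})`. -/
theorem stmt5 (n : ℕ) (Y : ℕ → Bool) (L R : ℕ)
    (hL : 1 ≤ L) (hLR : L ≤ R) (hRn : R ≤ n)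
    (t tstar : ℕ) (ht : L ≤ t) (ht' : t ≤ R + 1)
    (hts : L ≤ tstar) (hts' : tstar ≤ R + 1) :
    |(t : ℝ) - tstar| / ((R : ℝ) - L + 1) - stumpErr Y L R tstar
      ≤ stumpErr Y L R t := by
  have hd : (0:ℝ) < (R : ℝ) - L + 1 := by
    have : (L:ℝ) ≤ R := by exact_mod_cast hLR
    linarith
  rcases le_total t tstar with h | h
  · have hkey := stump_key Y L R t tstar h ht hts'
    have habs : |(t : ℝ) - tstar| = ((tstar - t : ℕ) : ℝ) := by
      rw [abs_sub_comm, abs_of_nonneg (sub_nonneg.mpr (Nat.cast_le.mpr h)),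
        Nat.cast_sub h]
    rw [habs, stumpErr, stumpErr, sub_le_iff_le_add, ← add_div,
      div_le_div_iff_of_pos_right hd]
    exact_mod_cast hkey
  · have hkey := stump_key Y L R tstar t h hts ht'
    have habs : |(t : ℝ) - tstar| = ((t - tstar : ℕ) : ℝ) := by
      rw [abs_of_nonneg (sub_nonneg.mpr (Nat.cast_le.mpr h)), Nat.cast_sub h]
    rw [habs, stumpErr, stumpErr, sub_le_iff_le_add, ← add_div,
      div_le_div_iff_of_pos_right hd]
    exact_mod_cast (by omega :
      t - tstar ≤
        ((Finset.Icc L R).filter fun j => stump t j ≠ Y j).card +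
        ((Finset.Icc L R).filter fun j => stump tstar j ≠ Y j).card)
end

section
/- For every integer k ≥ 1, every real s ≥ 1, and all positive integers w₁, …, w_k, the number of k-tuples (x₁, …, x_k) of positive integers satisfying x_i ≤ w_i for all i and x₁·x₂·⋯·x_k ≤ s is at most s · ∏_{i=2}^{k} (1 + ln w_i). -/
open scoped Classical

lemma aux7 (k : ℕ) : ∀ (s : ℝ), 0 ≤ s → ∀ (w : Fin (k+1) → ℕ),
    ((((Finset.Icc (fun _ => 1) w)).filter
        (fun x : Fin (k+1) → ℕ => ((∏ i, x i : ℕ) : ℝ) ≤ s)).card : ℝ)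
      ≤ s * ∏ i : Fin k, (1 + Real.log (w i.succ)) := by
  induction k with
  | zero =>
    intro s hs w
    simp only [Finset.univ_eq_empty, Finset.prod_empty, mul_one]
    calc ((((Finset.Icc (fun _ => 1) w)).filter
        (fun x : Fin 1 → ℕ => ((∏ i, x i : ℕ) : ℝ) ≤ s)).card : ℝ)
        ≤ ((Finset.Icc 1 ⌊s⌋₊).card : ℝ) := by
          have := Finset.card_le_card_of_injOn
            (f := fun x : Fin 1 → ℕ => x 0)
            (s := ((Finset.Icc (fun _ => 1) w)).filter
              (fun x : Fin 1 → ℕ => ((∏ i, x i : ℕ) : ℝ) ≤ s))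
            (t := Finset.Icc 1 ⌊s⌋₊)
            (by
              intro x hx
              simp only [Finset.mem_coe, Finset.mem_filter, Finset.mem_Icc, Pi.le_def] at hx ⊢
              obtain ⟨⟨h1, h2⟩, h3⟩ := hx
              rw [Fin.prod_univ_one] at h3
              exact ⟨h1 0, Nat.le_floor h3⟩)
            (by
              intro x hx y hy hxy
              funext i
              have : i = 0 := Subsingleton.elim _ _
              rw [this]; exact hxy)
          exact_mod_cast this
        _ ≤ s := by
          rw [Nat.card_Icc]
          simp only [Nat.add_sub_cancel]
          exact (Nat.floor_le hs)
  | succ k ih =>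
    intro s hs w
    set W := w (Fin.last (k+1)) with hW
    set S := ((Finset.Icc (fun _ => 1) w)).filter
        (fun x : Fin (k+2) → ℕ => ((∏ i, x i : ℕ) : ℝ) ≤ s) with hS
    have hfib : S.card = ∑ m ∈ Finset.Icc 1 W,
        (S.filter (fun x => x (Fin.last (k+1)) = m)).card := by
      apply Finset.card_eq_sum_card_fiberwise
      intro x hx
      simp only [hS, Finset.mem_coe, Finset.mem_filter, Finset.mem_Icc, Pi.le_def] at hx ⊢
      exact ⟨hx.1.1 _, hx.1.2 _⟩
    have key : ∀ m ∈ Finset.Icc 1 W,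
        ((S.filter (fun x => x (Fin.last (k+1)) = m)).card : ℝ)
          ≤ (s / m) * ∏ i : Fin k, (1 + Real.log (w i.succ.castSucc)) := by
      intro m hm
      have hm1 : 1 ≤ m := (Finset.mem_Icc.mp hm).1
      have hmpos : (0 : ℝ) < m := by exact_mod_cast hm1
      have hinj := Finset.card_le_card_of_injOn (f := Fin.init)
        (s := S.filter (fun x => x (Fin.last (k+1)) = m))
        (t := ((Finset.Icc (fun _ => 1) (Fin.init w))).filter
          (fun y : Fin (k+1) → ℕ => ((∏ i, y i : ℕ) : ℝ) ≤ s / m))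
        (by
          intro x hx
          simp only [hS, Finset.mem_coe, Finset.mem_filter, Finset.mem_Icc, Pi.le_def] at hx ⊢
          obtain ⟨⟨⟨h1, h2⟩, h3⟩, h4⟩ := hx
          refine ⟨⟨fun i => h1 _, fun i => h2 _⟩, ?_⟩
          rw [le_div_iff₀ hmpos]
          have hprod : (∏ i, x i) = (∏ i : Fin (k+1), Fin.init x i) * m := by
            rw [Fin.prod_univ_castSucc, h4]
            rfl
          rw [hprod] at h3
          exact_mod_cast h3)
        (by
          intro x hx y hy hxy
          simp only [Finset.mem_coe, Finset.mem_filter] at hx hy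
          calc x = Fin.snoc (Fin.init x) (x (Fin.last _)) := (Fin.snoc_init_self x).symm
            _ = Fin.snoc (Fin.init y) (y (Fin.last _)) := by rw [hxy, hx.2, hy.2]
            _ = y := Fin.snoc_init_self y)
      calc ((S.filter (fun x => x (Fin.last (k+1)) = m)).card : ℝ)
          ≤ ((((Finset.Icc (fun _ => 1) (Fin.init w))).filter
              (fun y : Fin (k+1) → ℕ => ((∏ i, y i : ℕ) : ℝ) ≤ s / m)).card : ℝ) := by
            exact_mod_cast hinj
        _ ≤ (s / m) * ∏ i : Fin k, (1 + Real.log ((Fin.init w) i.succ)) :=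
            ih (s / m) (div_nonneg hs hmpos.le) (Fin.init w)
        _ = (s / m) * ∏ i : Fin k, (1 + Real.log (w i.succ.castSucc)) := by
            congr 1
    set P := ∏ i : Fin k, (1 + Real.log (w i.succ.castSucc)) with hP
    have hPnn : 0 ≤ P := Finset.prod_nonneg (fun i _ => by
      have := Real.log_natCast_nonneg (w i.succ.castSucc); linarith)
    have hsum : (S.card : ℝ) ≤ ∑ m ∈ Finset.Icc 1 W, (s / m) * P := by
      rw [hfib]
      push_cast
      exact Finset.sum_le_sum key
    have hharm : ∑ m ∈ Finset.Icc 1 W, (m : ℝ)⁻¹ ≤ 1 + Real.log W := by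
      have h1 : ((harmonic W : ℚ) : ℝ) = ∑ m ∈ Finset.Icc 1 W, (m : ℝ)⁻¹ := by
        rw [harmonic_eq_sum_Icc]; push_cast; ring_nf
      calc ∑ m ∈ Finset.Icc 1 W, (m : ℝ)⁻¹ = ((harmonic W : ℚ) : ℝ) := h1.symm
        _ ≤ 1 + Real.log W := harmonic_le_one_add_log W
    calc (S.card : ℝ) ≤ ∑ m ∈ Finset.Icc 1 W, (s / m) * P := hsum
      _ = s * P * ∑ m ∈ Finset.Icc 1 W, (m : ℝ)⁻¹ := by
          rw [Finset.mul_sum]; apply Finset.sum_congr rfl; intro m _; ring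
      _ ≤ s * P * (1 + Real.log W) := by
          apply mul_le_mul_of_nonneg_left hharm (by positivity)
      _ = s * ∏ i : Fin (k+1), (1 + Real.log (w i.succ)) := by
          rw [Fin.prod_univ_castSucc]
          simp only [Fin.succ_castSucc, Fin.succ_last, ← hW, hP]
          ring

/-- The number of `k`-tuples `(x₁, …, x_k)` of positive integers with `x_i ≤ w_i` for
all `i` and `x₁⋯x_k ≤ s` is at most `s · ∏_{i=2}^{k} (1 + ln w_i)`. -/
theorem stmt7 (k : ℕ) (hk : 1 ≤ k) (s : ℝ) (hs : 1 ≤ s)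
    (w : Fin k → ℕ) (hw : ∀ i, 1 ≤ w i) :
    ((((Finset.Icc (fun _ => 1) w)).filter
        (fun x : Fin k → ℕ => ((∏ i, x i : ℕ) : ℝ) ≤ s)).card : ℝ)
      ≤ s * ∏ i ∈ Finset.univ.filter (fun i : Fin k => i.val ≠ 0),
          (1 + Real.log (w i)) := by
  obtain ⟨k', rfl⟩ : ∃ k', k = k' + 1 := ⟨k - 1, by omega⟩
  have hprod : ∏ i ∈ Finset.univ.filter (fun i : Fin (k'+1) => i.val ≠ 0),
      (1 + Real.log (w i)) = ∏ i : Fin k', (1 + Real.log (w i.succ)) := by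
    rw [Finset.prod_filter, Fin.prod_univ_succ]
    simp
  rw [hprod]
  exact aux7 k' s (by linarith) w
end

section
/- For all integers d and dim with 1 ≤ d ≤ dim and 2 ≤ dim, if m = 10 · 2^d · (d + log₂ dim), then (14 · m · dim)^{2^d} < 2^m. -/
/-! With `L = d + log₂ dim` we have `2^d · dim = 2^L`, so the base is `140 · L · 2^L`, which is
below `2^(10L)` as soon as `L ≥ 1` (Bernoulli: `512^L ≥ 1 + 511 L`). Raising to the power `2^d`
turns `2^(10L)` into `2^m`. -/

open Real

lemma mul_lt_two_rpow_nine_mul {x : ℝ} (hx : 1 ≤ x) : 140 * x < 2 ^ (9 * x) :=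
  calc 140 * x < 1 + x * 511 := by linarith
    _ ≤ (1 + 511) ^ x := one_add_mul_self_le_rpow_one_add (by norm_num) hx
    _ = 2 ^ (9 * x) := by rw [rpow_mul zero_le_two]; norm_num

lemma mul_mul_two_rpow_lt_two_rpow {x : ℝ} (hx : 1 ≤ x) : 140 * x * 2 ^ x < 2 ^ (10 * x) :=
  calc 140 * x * 2 ^ x < 2 ^ (9 * x) * 2 ^ x :=
        mul_lt_mul_of_pos_right (mul_lt_two_rpow_nine_mul hx) (rpow_pos_of_pos two_pos x)
    _ = 2 ^ (10 * x) := by rw [← rpow_add two_pos]; ring_nf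

lemma two_pow_mul_eq_two_rpow_add_logb (n : ℕ) {y : ℝ} (hy : 0 < y) :
    2 ^ n * y = (2 : ℝ) ^ (n + logb 2 y) := by
  rw [rpow_add two_pos, rpow_natCast, rpow_logb two_pos (by norm_num) hy]

theorem stmt10_general (d dim : ℕ) (hdim : 2 ≤ dim) :
    (14 * (10 * 2 ^ d * ((d : ℝ) + Real.logb 2 dim)) * dim) ^ (2 ^ d)
      < (2 : ℝ) ^ (10 * 2 ^ d * ((d : ℝ) + Real.logb 2 dim)) := by
  set L : ℝ := d + logb 2 dim
  have hdim_pos : (0 : ℝ) < dim := by positivity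
  have hL : 1 ≤ L := by
    have : logb 2 2 ≤ logb 2 dim :=
      logb_le_logb_of_le one_lt_two zero_lt_two (by exact_mod_cast hdim)
    rw [logb_self_eq_one one_lt_two] at this
    linarith [d.cast_nonneg (α := ℝ)]
  have hbase : 14 * (10 * 2 ^ d * L) * dim < 2 ^ (10 * L) :=
    calc 14 * (10 * 2 ^ d * L) * dim = 140 * L * (2 ^ d * dim) := by ring
      _ = 140 * L * 2 ^ L := by rw [two_pow_mul_eq_two_rpow_add_logb d hdim_pos]
      _ < 2 ^ (10 * L) := mul_mul_two_rpow_lt_two_rpow hL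
  calc (14 * (10 * 2 ^ d * L) * dim) ^ (2 ^ d)
      < ((2 : ℝ) ^ (10 * L)) ^ (2 ^ d) := pow_lt_pow_left₀ hbase (by positivity) (by positivity)
    _ = 2 ^ (10 * 2 ^ d * L) := by
      rw [← rpow_natCast, ← rpow_mul zero_le_two]; push_cast; ring_nf

/-- For `1 ≤ d ≤ dim` and `2 ≤ dim`, with `m = 10·2^d·(d + log₂ dim)` we have
`(14·m·dim)^{2^d} < 2^m` (the right-hand power is a real power). This is the
arithmetic core of the bound `V_H ≤ 10·2^d(d + log₂ dim)` on the VC dimension of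
decision trees of height at most `d` over `dim`-dimensional data. -/
theorem stmt10 (d dim : ℕ) (hd : 1 ≤ d) (hddim : d ≤ dim) (hdim : 2 ≤ dim) :
    (14 * (10 * 2 ^ d * ((d : ℝ) + Real.logb 2 dim)) * dim) ^ (2 ^ d)
      < (2 : ℝ) ^ (10 * 2 ^ d * ((d : ℝ) + Real.logb 2 dim)) :=
  stmt10_general d dim hdim
end

section
/- Let dim ≥ 1 be an integer and let X be a finite set of n ≥ 1 points in ℝ^dim. Call a point x ∈ X heavy in coordinate a if |{y ∈ X : y_a = x_a}| > 2 · n^{1 − 1/dim}. Then the number of points x ∈ X that are heavy in every coordinate a ∈ {1, …, dim} is at most n / 2^dim. -/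
open scoped Classical

/-- Let `X` be a finite set of `n ≥ 1` points in `ℝ^dim`. Call `x ∈ X` heavy in
coordinate `a` if more than `2·n^{1−1/dim}` points of `X` share its `a`-th
coordinate. Then at most `n / 2^dim` points of `X` are heavy in every coordinate. -/
theorem stmt12 (dim : ℕ) (hdim : 1 ≤ dim) (X : Finset (Fin dim → ℝ)) (hX : 1 ≤ X.card) :
    (((X.filter fun x => ∀ a : Fin dim,
        2 * (X.card : ℝ) ^ (1 - 1 / (dim : ℝ))
          < ((X.filter fun y => y a = x a).card : ℝ)).card : ℝ))
      ≤ (X.card : ℝ) / 2 ^ dim := by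
  set n := X.card with hn
  have hn1 : (1:ℝ) ≤ (n:ℝ) := by exact_mod_cast hX
  have hnpos : (0:ℝ) < (n:ℝ) := by linarith
  set c : ℝ := 2 * (n:ℝ) ^ (1 - 1 / (dim : ℝ)) with hc
  have hpow : (0:ℝ) < (n:ℝ) ^ (1 - 1 / (dim : ℝ)) := Real.rpow_pos_of_pos hnpos _
  have hcpos : 0 < c := by positivity
  set H := X.filter (fun x => ∀ a : Fin dim,
      c < ((X.filter fun y => y a = x a).card : ℝ)) with hH
  set S : Fin dim → Finset ℝ := fun a => H.image (fun x => x a) with hS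
  -- each S a is small
  have hSa : ∀ a : Fin dim, ((S a).card : ℝ) ≤ (n:ℝ) / c := by
    intro a
    have hdisj : ∀ v ∈ S a, ∀ w ∈ S a, v ≠ w →
        Disjoint (X.filter fun y => y a = v) (X.filter fun y => y a = w) := by
      intro v _ w _ hvw
      refine Finset.disjoint_left.mpr ?_
      intro z hz hz'
      simp only [Finset.mem_filter] at hz hz'
      exact hvw (hz.2 ▸ hz'.2 ▸ rfl)
    have hsum : (∑ v ∈ S a, ((X.filter fun y => y a = v).card)) ≤ n := by
      rw [← Finset.card_biUnion hdisj]
      apply Finset.card_le_card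
      intro z hz
      simp only [Finset.mem_biUnion, Finset.mem_filter] at hz
      obtain ⟨v, _, hzX, _⟩ := hz
      exact hzX
    have hterm : ∀ v ∈ S a, c ≤ ((X.filter fun y => y a = v).card : ℝ) := by
      intro v hv
      simp only [hS, Finset.mem_image] at hv
      obtain ⟨x, hx, rfl⟩ := hv
      simp only [hH, Finset.mem_filter] at hx
      exact le_of_lt (hx.2 a)
    have h1 : ((S a).card : ℝ) * c ≤ (n:ℝ) := by
      calc ((S a).card : ℝ) * c = ∑ _v ∈ S a, c := by
              rw [Finset.sum_const, nsmul_eq_mul]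
        _ ≤ ∑ v ∈ S a, ((X.filter fun y => y a = v).card : ℝ) :=
              Finset.sum_le_sum hterm
        _ = ((∑ v ∈ S a, ((X.filter fun y => y a = v).card) : ℕ) : ℝ) := by
              push_cast; ring
        _ ≤ (n:ℝ) := by exact_mod_cast hsum
    rw [le_div_iff₀ hcpos]
    exact h1
  -- H embeds in the product
  have hHsub : H ⊆ Fintype.piFinset S := by
    intro x hx
    rw [Fintype.mem_piFinset]
    intro a
    exact Finset.mem_image_of_mem _ hx
  have hcard : (H.card : ℝ) ≤ ∏ a : Fin dim, ((S a).card : ℝ) := by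
    have := Finset.card_le_card hHsub
    rw [Fintype.card_piFinset] at this
    calc (H.card : ℝ) ≤ ((∏ a : Fin dim, (S a).card : ℕ) : ℝ) := by exact_mod_cast this
      _ = ∏ a : Fin dim, ((S a).card : ℝ) := by push_cast; ring
  have hprod : ∏ a : Fin dim, ((S a).card : ℝ) ≤ ((n:ℝ)/c)^dim := by
    have hpc : ((n:ℝ)/c)^dim = ∏ _a : Fin dim, ((n:ℝ)/c) := by
      simp [Finset.prod_const, div_pow]
    rw [hpc]
    apply Finset.prod_le_prod
    · intro a _; exact Nat.cast_nonneg _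
    · intro a _; exact hSa a
  -- compute the bound
  have hdim0 : (dim:ℝ) ≠ 0 := Nat.cast_ne_zero.mpr (by omega)
  have hkey : ((n:ℝ)/c)^dim = (n:ℝ) / 2^dim := by
    have h1 : (n:ℝ)^((1:ℝ)/dim) = (n:ℝ) / (n:ℝ)^(1 - 1/(dim:ℝ)) := by
      rw [show (1:ℝ)/dim = 1 - (1 - 1/(dim:ℝ)) by ring, Real.rpow_sub hnpos, Real.rpow_one]; norm_num
    have hnc : (n:ℝ)/c = (n:ℝ) ^ ((1:ℝ) / dim) / 2 := by
      rw [hc, h1, div_div, mul_comm]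
    rw [hnc, div_pow, ← Real.rpow_natCast ((n:ℝ) ^ ((1:ℝ)/dim)) dim,
      ← Real.rpow_mul (le_of_lt hnpos), one_div, inv_mul_cancel₀ hdim0, Real.rpow_one]
  calc (H.card : ℝ) ≤ ∏ a : Fin dim, ((S a).card : ℝ) := hcard
    _ ≤ ((n:ℝ)/c)^dim := hprod
    _ = (n:ℝ) / 2^dim := hkey
end
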